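/- arXiv:2012.14880 — 6 statements merged into one kernel-verified Lean document; each statement's English description precedes it below -/
import Mathlib

section
/- Let G be a group and H ≤ G a subgroup of index at most n. If H satisfies a group law w_H, then G satisfies the composite law w_H ∘ x^{n!}. -/
/-!
`G` acts on the `H.index` cosets of `H` with kernel the normal core of `H`, so the quotient by
the core embeds in a symmetric group of order `H.index !`. Hence every `n!`-th power lies in the
core, in particular in `H`, and evaluating `w` at `n!`-th powers is an evaluation in `H`.
-/

open Nat

namespace Subgroup

variable {G : Type*} [Group G]

theorem index_normalCore_dvd_factorial (H : Subgroup G) [H.FiniteIndex] :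
    H.normalCore.index ∣ H.index ! := by
  rw [normalCore_eq_ker, index_ker, index_eq_card, ← Nat.card_perm]
  exact card_subgroup_dvd_card (MulAction.toPermHom G (G ⧸ H)).range

theorem pow_factorial_mem {H : Subgroup G} {n : ℕ} (h0 : H.index ≠ 0) (hn : H.index ≤ n)
    (g : G) : g ^ n ! ∈ H := by
  have : H.FiniteIndex := ⟨h0⟩
  obtain ⟨c, hc⟩ := H.index_normalCore_dvd_factorial.trans (factorial_dvd_factorial hn)
  apply H.normalCore_le
  rw [hc, pow_mul]
  exact pow_mem (H.normalCore.pow_index_mem g) c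

end Subgroup

theorem FreeGroup.lift_lift {α β G : Type*} [Group G] (f : β → G) (g : α → FreeGroup β)
    (w : FreeGroup α) : lift f (lift g w) = lift (fun a => lift f (g a)) w :=
  lift_unique ((lift f).comp (lift g)) (by simp)

/-- If H ≤ G has (finite) index at most n and H satisfies the law w,
then G satisfies the composite law w ∘ x^{n!}. -/
theorem law_finite_index {G : Type*} [Group G] (H : Subgroup G) (n : ℕ)
    (hpos : 0 < H.index) (hle : H.index ≤ n)
    {r : ℕ} (w : FreeGroup (Fin r))
    (hH : ∀ f : Fin r → G, (∀ i, f i ∈ H) → FreeGroup.lift f w = 1) :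
    ∀ f : Fin r → G,
      FreeGroup.lift f (FreeGroup.lift (fun i => FreeGroup.of i ^ (Nat.factorial n)) w) = 1 := by
  intro f
  simp only [FreeGroup.lift_lift, map_pow, FreeGroup.lift_apply_of]
  exact hH _ fun i => Subgroup.pow_factorial_mem hpos.ne' hle (f i)
end

section
/- Let H be a torsion-free hyperbolic group, φ an automorphism of H, and a ∈ H a nontrivial element. If there exist nonzero integers k and l such that φ(a^k) = a^l, then φ(a) = a or φ(a) = a^{-1}. -/
/-
The centralizer of a nontrivial element `a` is an infinite cyclic group `⟨b⟩` which, by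
maximality, is also the centralizer of each of its nontrivial elements. Since `φ a` commutes
with `φ (a ^ k) = a ^ l`, it lies in `C(a ^ l) = C(a)`, so `C(φ a) = C(a)`. Hence `φ` maps
`⟨b⟩ = C(a)` onto `C(φ a) = ⟨b⟩`, i.e. restricts to an automorphism of `ℤ`, which is `±1`.
-/

/-- A monoid is torsion-free if every non-identity element has infinite order
(the definition of `Monoid.IsTorsionFree` in the older Mathlib, since removed). -/
def Monoid.IsTorsionFree (G : Type*) [Monoid G] : Prop :=
  ∀ g : G, g ≠ 1 → ¬IsOfFinOrder g

open Subgroup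

def CentralizersAreMaximalCyclic (H : Type*) [Group H] : Prop :=
  ∀ g : H, g ≠ 1 →
    (∃ b : H, centralizer {g} = zpowers b) ∧
    ∀ z : H, centralizer {g} ≤ zpowers z → centralizer {g} = zpowers z

theorem MulEquiv.map_centralizer {G G' : Type*} [Group G] [Group G'] (φ : G ≃* G')
    (s : Set G) : (centralizer s).map φ = centralizer (φ '' s) := by
  refine le_antisymm (map_centralizer_le_centralizer_image s φ.toMonoidHom) fun x hx => ?_
  refine ⟨φ.symm x, fun y hy => φ.injective ?_, φ.apply_symm_apply x⟩
  simpa using hx (φ y) ⟨y, hy, rfl⟩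

theorem MonoidHom.map_eq_or_eq_inv_of_map_zpowers_eq {G : Type*} [Group G] (f : G →* G)
    {b x : G} (hf : (zpowers b).map f = zpowers b) (hxb : x ∈ zpowers b)
    (hx : ¬IsOfFinOrder x) : f x = x ∨ f x = x⁻¹ := by
  obtain ⟨m, rfl⟩ := mem_zpowers_iff.mp hxb
  have hb : ¬IsOfFinOrder b := fun hb => hx hb.zpow
  rw [f.map_zpowers, eq_comm, zpowers_eq_zpowers_iff hb] at hf
  rcases hf with hfb | hfb
  · left; rw [map_zpow, ← hfb]
  · right; rw [map_zpow, ← hfb, inv_zpow]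

namespace CentralizersAreMaximalCyclic

variable {H : Type*} [Group H]

theorem centralizer_eq_of_mem_centralizer (hmc : CentralizersAreMaximalCyclic H) {g x : H}
    (hg : g ≠ 1) (hx : x ≠ 1) (hxg : x ∈ centralizer {g}) :
    centralizer {g} = centralizer {x} := by
  obtain ⟨b, hb⟩ := (hmc g hg).1
  obtain ⟨c, hc⟩ := (hmc x hx).1
  -- `C(g) = ⟨b⟩` is abelian and contains `x`, so it lies in `C(x)`.
  have hle : centralizer {g} ≤ centralizer {x} := by
    rw [hb] at hxg ⊢
    obtain ⟨i, rfl⟩ := mem_zpowers_iff.mp hxg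
    rintro - ⟨j, rfl⟩
    exact mem_centralizer_singleton_iff.mpr (Commute.zpow_zpow_self b j i).eq
  rw [hc] at hle ⊢
  exact (hmc g hg).2 c hle

end CentralizersAreMaximalCyclic

open CentralizersAreMaximalCyclic in
theorem aut_fixes_root_general {H : Type*} [Group H]
    (htf : Monoid.IsTorsionFree H)
    (hmc : ∀ g : H, g ≠ 1 →
      (∃ b : H, Subgroup.centralizer {g} = Subgroup.zpowers b) ∧
      ∀ z : H, Subgroup.centralizer {g} ≤ Subgroup.zpowers z →
        Subgroup.centralizer {g} = Subgroup.zpowers z)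
    (φ : H ≃* H) (a : H) (ha : a ≠ 1)
    (k l : ℤ) (hl : l ≠ 0)
    (h : φ (a ^ k) = a ^ l) : φ a = a ∨ φ a = a⁻¹ := by
  have hal : a ^ l ≠ 1 := fun hal => htf a ha (isOfFinOrder_iff_zpow_eq_one.mpr ⟨l, hl, hal⟩)
  have hφa : φ a ≠ 1 := φ.map_ne_one_iff.mpr ha
  have hφa_mem : φ a ∈ centralizer {a ^ l} := by
    rw [← h, map_zpow]
    exact mem_centralizer_singleton_iff.mpr (Commute.self_zpow (φ a) k).eq
  have hC : centralizer {a} = centralizer {φ a} :=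
    (centralizer_eq_of_mem_centralizer hmc ha hal
      (mem_centralizer_singleton_iff.mpr (Commute.zpow_self a l).eq)).trans
    (centralizer_eq_of_mem_centralizer hmc hal hφa hφa_mem)
  obtain ⟨b, hb⟩ := (hmc a ha).1
  have hφb : (zpowers b).map (φ : H →* H) = zpowers b := by
    rw [← hb, φ.map_centralizer, Set.image_singleton, ← hC]
  exact (φ : H →* H).map_eq_or_eq_inv_of_map_zpowers_eq hφb
    (hb ▸ mem_centralizer_singleton_iff.mpr rfl) (htf a ha)

/-- Let H be a torsion-free hyperbolic group (encoded via the
characteristic property that the centralizer of every nontrivial element is a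
maximal cyclic subgroup), φ an automorphism, a ≠ 1.  If φ(a^k) = a^l for nonzero
integers k, l then φ(a) = a or φ(a) = a⁻¹. -/
theorem aut_fixes_root {H : Type*} [Group H]
    (htf : Monoid.IsTorsionFree H)
    (hmc : ∀ g : H, g ≠ 1 →
      (∃ b : H, Subgroup.centralizer {g} = Subgroup.zpowers b) ∧
      ∀ z : H, Subgroup.centralizer {g} ≤ Subgroup.zpowers z →
        Subgroup.centralizer {g} = Subgroup.zpowers z)
    (φ : H ≃* H) (a : H) (ha : a ≠ 1)
    (k l : ℤ) (hk : k ≠ 0) (hl : l ≠ 0)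
    (h : φ (a ^ k) = a ^ l) : φ a = a ∨ φ a = a⁻¹ :=
  aut_fixes_root_general htf hmc φ a ha k l hl h
end

section
/- Let H be a commutative transitive group and ψ an automorphism of H. If g ∈ H is such that the subgroup generated by {ψ^k(g) : k ∈ ℤ} is nonabelian, then the subgroup generated by g and ψ(g) is nonabelian. -/
/-!
If `g = 1` every iterate is trivial. Otherwise all iterates `ψ^k g` are nontrivial, and if `g`
commutes with `ψ g`, applying `ψ^m` shows that consecutive iterates commute. Commutative
transitivity propagates this along the chain to all pairs of iterates, so they generate an
abelian subgroup.
-/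

def IsCommTransitive (H : Type*) [Group H] : Prop :=
  ∀ a b c : H, a ≠ 1 → b ≠ 1 → c ≠ 1 → Commute a b → Commute b c → Commute a c

theorem Subgroup.commute_of_mem_closure {G : Type*} [Group G] {s : Set G}
    (hs : ∀ a ∈ s, ∀ b ∈ s, Commute a b) {x y : G}
    (hx : x ∈ closure s) (hy : y ∈ closure s) : Commute x y :=
  Set.centralizer_centralizer_comm_of_comm hs _ (closure_le_centralizer_centralizer s hx) _
    (closure_le_centralizer_centralizer s hy)

theorem IsCommTransitive.commute_of_commute_succ {H : Type*} [Group H]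
    (hct : IsCommTransitive H) {f : ℤ → H} (hf : ∀ m, f m ≠ 1)
    (hsucc : ∀ m, Commute (f m) (f (m + 1))) (j k : ℤ) : Commute (f j) (f k) := by
  wlog hjk : j ≤ k generalizing j k
  · exact (this k j (le_of_not_ge hjk)).symm
  induction k, hjk using Int.leInduction with
  | base => rfl
  | succ n _ ih => exact hct _ _ _ (hf j) (hf n) (hf (n + 1)) ih (hsucc n)

theorem MulAut.commute_zpow_apply_succ {G : Type*} [Group G] {ψ : MulAut G} {g : G}
    (hg : Commute g (ψ g)) (m : ℤ) : Commute ((ψ ^ m) g) ((ψ ^ (m + 1)) g) := by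
  rw [zpow_add_one, MulAut.mul_apply]
  exact hg.map (ψ ^ m)

/-- In a commutative transitive group, if the subgroup generated by
all ψ-iterates of g is nonabelian, then ⟨g, ψ(g)⟩ is already nonabelian. -/
theorem ct_iterates {H : Type*} [Group H]
    (hct : ∀ a b c : H, a ≠ 1 → b ≠ 1 → c ≠ 1 →
      Commute a b → Commute b c → Commute a c)
    (ψ : MulAut H) (g : H)
    (hna : ¬ ∀ x ∈ Subgroup.closure (Set.range fun k : ℤ => (ψ ^ k) g),
        ∀ y ∈ Subgroup.closure (Set.range fun k : ℤ => (ψ ^ k) g), Commute x y) :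
    ¬ ∀ x ∈ Subgroup.closure {g, ψ g},
        ∀ y ∈ Subgroup.closure {g, ψ g}, Commute x y := by
  intro hab
  refine hna fun x hx y hy => Subgroup.commute_of_mem_closure ?_ hx hy
  rintro _ ⟨j, rfl⟩ _ ⟨k, rfl⟩
  by_cases hg : g = 1
  · simp [hg]
  have hg_comm : Commute g (ψ g) :=
    hab g (Subgroup.subset_closure (by simp)) (ψ g) (Subgroup.subset_closure (by simp))
  exact IsCommTransitive.commute_of_commute_succ hct (f := fun k => (ψ ^ k) g)
    (fun m => by simpa using hg) (MulAut.commute_zpow_apply_succ hg_comm) j k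
end

section
/- Let F be a 2-free word-hyperbolic group and A an abelian group, and let E be a group fitting in a short exact sequence 1 → F → E → A → 1. If T ⊆ E is a finite generating set of a subgroup ⟨T⟩ of exponential growth, then there exist words of T-length at most 6 that freely generate a nonabelian free subgroup of ⟨T⟩. -/
/-!
Suppose no two words of length at most `6` freely generate a free group. If two letters `x, y`
of `T` do not commute, `a = ⁅x, y⁆ ≠ 1` lies in `F` (as `A` is abelian) and its centralizer in
`F` is a maximal cyclic subgroup `⟨z⟩`. By `2`-freeness, every short word in `F` that is not part
of a free pair with `a` lies in `⟨z⟩`: so do the commutators of letters (length `4`) and the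
conjugates `x⁻¹ * a * x` by letters (length `6`). The centralizer of such a conjugate is again
`⟨z⟩` by maximality, which forces `x⁻¹ * z * x ∈ ⟨z⟩`. Hence the letters normalize `⟨z⟩` and
commute modulo it (trivially, with `z = 1`, if all letters commute). Collecting the letters of a
word of length `n` in a fixed order then writes it as `t₁ ^ e₁ * ⋯ * tₘ ^ eₘ * z ^ s` with
`eᵢ ≤ n` and `|s| = O(n²)`, so balls grow polynomially, contradicting exponential growth.
-/

/-- `g` can be written as a word of length at most `N` in `S ∪ S⁻¹`. -/
def ShortWord {G : Type*} [Group G] (S : Set G) (N : ℕ) (g : G) : Prop :=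
  ∃ l : List G, (∀ x ∈ l, x ∈ S ∨ x⁻¹ ∈ S) ∧ l.length ≤ N ∧ l.prod = g

/-- The ball of radius `n` in the word metric of `S`. -/
def wordBall {G : Type*} [Group G] (S : Set G) (n : ℕ) : Set G :=
  {g | ShortWord S n g}

/-- The exponential growth rate of a generating set, as the infimum (= limit, by
submultiplicativity) of `log |B_n| / n`. -/
noncomputable def growthRate {G : Type*} [Group G] (S : Set G) : ℝ :=
  ⨅ n : ℕ+, Real.log (Nat.card ↥(wordBall S (n : ℕ))) / ((n : ℕ) : ℝ)

open Filter Subgroup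
open scoped Pointwise commutatorElement

section Words

variable {G : Type*} [Group G] {S : Set G}

theorem ShortWord.mul {m n : ℕ} {g g' : G} (hg : ShortWord S m g) (hg' : ShortWord S n g') :
    ShortWord S (m + n) (g * g') := by
  obtain ⟨l, hl, hlen, rfl⟩ := hg
  obtain ⟨l', hl', hlen', rfl⟩ := hg'
  refine ⟨l ++ l', fun x hx => ?_, by simp only [List.length_append]; omega, List.prod_append⟩
  rcases List.mem_append.mp hx with hx | hx
  exacts [hl x hx, hl' x hx]

theorem ShortWord.mono {m n : ℕ} {g : G} (hmn : m ≤ n) (hg : ShortWord S m g) :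
    ShortWord S n g :=
  let ⟨l, hl, hlen, hprod⟩ := hg
  ⟨l, hl, hlen.trans hmn, hprod⟩

theorem ShortWord.of_mem {x : G} (hx : x ∈ S ∪ S⁻¹) : ShortWord S 1 x :=
  ⟨[x], by simpa using hx, by simp, by simp⟩

theorem inv_mem_union_inv {x : G} (hx : x ∈ S ∪ S⁻¹) : x⁻¹ ∈ S ∪ S⁻¹ := by
  simpa [or_comm] using hx

theorem ShortWord.commutatorElement {x y : G} (hx : x ∈ S ∪ S⁻¹) (hy : y ∈ S ∪ S⁻¹) :
    ShortWord S 4 ⁅x, y⁆ := by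
  rw [commutatorElement_def]
  exact (((of_mem hx).mul (of_mem hy)).mul (of_mem (inv_mem_union_inv hx))).mul
    (of_mem (inv_mem_union_inv hy))

theorem ShortWord.conj {x g : G} {n : ℕ} (hx : x ∈ S ∪ S⁻¹) (hg : ShortWord S n g) :
    ShortWord S (n + 2) (x⁻¹ * g * x) :=
  (((of_mem (inv_mem_union_inv hx)).mul hg).mul (of_mem hx)).mono (by omega)

theorem growthRate_nonpos_of_card_wordBall_le {C d : ℕ}
    (hC : ∀ n, Nat.card (wordBall S n) ≤ C * (n + 1) ^ d) : growthRate S ≤ 0 := by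
  have hbdd : BddBelow (Set.range fun n : ℕ+ =>
      Real.log (Nat.card (wordBall S (n : ℕ))) / ((n : ℕ) : ℝ)) :=
    ⟨0, by rintro _ ⟨n, rfl⟩; exact div_nonneg (Real.log_natCast_nonneg _) (Nat.cast_nonneg _)⟩
  have hle : ∀ n : ℕ, 1 ≤ n →
      growthRate S ≤ (Real.log (C * 2 ^ d + 1) + d * Real.log n) / n := by
    intro n hn
    refine (ciInf_le hbdd ⟨n, hn⟩).trans (div_le_div_of_nonneg_right ?_ n.cast_nonneg)
    change Real.log (Nat.card (wordBall S n)) ≤ _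
    have hcard : Nat.card (wordBall S n) ≤ (C * 2 ^ d + 1) * n ^ d :=
      calc Nat.card (wordBall S n) ≤ C * (2 * n) ^ d :=
            (hC n).trans (by gcongr; omega)
        _ ≤ (C * 2 ^ d + 1) * n ^ d := by rw [mul_pow, ← mul_assoc]; gcongr; omega
    rcases Nat.eq_zero_or_pos (Nat.card (wordBall S n)) with h0 | hpos
    · rw [h0, Nat.cast_zero, Real.log_zero]
      have := Real.log_natCast_nonneg n
      have := Real.log_nonneg (by norm_cast; omega : (1 : ℝ) ≤ C * 2 ^ d + 1)
      positivity
    · calc Real.log (Nat.card (wordBall S n)) ≤ Real.log ((C * 2 ^ d + 1) * n ^ d) :=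
            Real.log_le_log (by exact_mod_cast hpos) (by exact_mod_cast hcard)
        _ = Real.log (C * 2 ^ d + 1) + d * Real.log n := by
            rw [Real.log_mul (by positivity) (by positivity), Real.log_pow]
  have hlim : Tendsto (fun n : ℕ => (Real.log (C * 2 ^ d + 1) + d * Real.log n) / n)
      atTop (nhds 0) := by
    have hlog : Tendsto (fun n : ℕ => Real.log n / n) atTop (nhds 0) := by
      have := (Real.tendsto_pow_log_div_mul_add_atTop 1 0 1 one_ne_zero).comp
        tendsto_natCast_atTop_atTop
      simpa [Function.comp_def] using this
    simpa [add_div, mul_div_assoc] using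
      (tendsto_const_div_atTop_nhds_zero_nat (Real.log (C * 2 ^ d + 1))).add
        (hlog.const_mul (d : ℝ))
  exact ge_of_tendsto hlim ((eventually_ge_atTop 1).mono hle)

end Words

section Collection

variable {G : Type*} [Group G] {h : G} {Q B : ℕ}

def MovesPow (h : G) (Q : ℕ) (g : G) : Prop :=
  ∀ c : ℤ, ∃ c' : ℤ, h ^ c * g = g * h ^ c' ∧ c'.natAbs ≤ max c.natAbs Q

def CommutesUpTo (h : G) (B : ℕ) (u v : G) : Prop :=
  ∃ c : ℤ, c.natAbs ≤ B ∧ u * v = v * u * h ^ c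

theorem movesPow_one : MovesPow h Q 1 := fun c => ⟨c, by simp, le_max_left _ _⟩

theorem MovesPow.mul {g g' : G} (hg : MovesPow h Q g) (hg' : MovesPow h Q g') :
    MovesPow h Q (g * g') := by
  intro c
  obtain ⟨c₁, h₁, hc₁⟩ := hg c
  obtain ⟨c₂, h₂, hc₂⟩ := hg' c₁
  refine ⟨c₂, by rw [← mul_assoc, h₁, mul_assoc, h₂, mul_assoc], ?_⟩
  exact hc₂.trans (max_le hc₁ (le_max_right _ _))

theorem MovesPow.pow {g : G} (hg : MovesPow h Q g) : ∀ n : ℕ, MovesPow h Q (g ^ n)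
  | 0 => by simpa using movesPow_one
  | n + 1 => by simpa [pow_succ] using (hg.pow n).mul hg

/-- Conjugation by `x` restricts to an automorphism of `⟨h⟩`: it is `h ↦ h ^ (±1)` if `h` has
infinite order, and otherwise exponents only matter modulo `orderOf h`. -/
theorem movesPow_of_conj_mem_zpowers {x : G} (hx : x⁻¹ * h * x ∈ zpowers h)
    (hx' : x * h * x⁻¹ ∈ zpowers h) : MovesPow h (orderOf h) x := by
  obtain ⟨β, hβ⟩ := mem_zpowers_iff.mp hx
  obtain ⟨α, hα⟩ := mem_zpowers_iff.mp hx'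
  have hconj : ∀ c : ℤ, h ^ c * x = x * h ^ (β * c) := fun c => by
    have : x⁻¹ * h ^ c * x = h ^ (β * c) := by
      simpa [zpow_mul, hβ] using (conj_zpow (a := x⁻¹) (b := h) (i := c)).symm
    rw [← this]; group
  intro c
  rcases Nat.eq_zero_or_pos (orderOf h) with hQ | hQ
  · have hαβ : h ^ (α * β) = h ^ (1 : ℤ) := by
      rw [zpow_mul, hα, conj_zpow, hβ]; group
    rw [zpow_eq_zpow_iff_modEq, hQ, Nat.cast_zero, Int.modEq_zero_iff] at hαβ
    refine ⟨β * c, hconj c, ?_⟩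
    rcases Int.eq_one_or_neg_one_of_mul_eq_one (mul_comm α β ▸ hαβ) with rfl | rfl <;> simp
  · refine ⟨β * c % orderOf h, by rw [zpow_mod_orderOf, hconj], le_max_of_le_right ?_⟩
    have := Int.emod_lt_of_pos (β * c) (by exact_mod_cast hQ : (0 : ℤ) < orderOf h)
    have := Int.emod_nonneg (β * c) (by exact_mod_cast hQ.ne' : (orderOf h : ℤ) ≠ 0)
    omega

theorem CommutesUpTo.mul_pow {u v : G} (huv : CommutesUpTo h B u v) (hv : MovesPow h Q v) :
    ∀ n : ℕ, ∃ d : ℤ, u * v ^ n = v ^ n * u * h ^ d ∧ d.natAbs ≤ n * max B Q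
  | 0 => ⟨0, by simp, by simp⟩
  | n + 1 => by
    obtain ⟨d, hd, hdB⟩ := CommutesUpTo.mul_pow huv hv n
    obtain ⟨c, hcB, hc⟩ := huv
    obtain ⟨c', hc', hc'B⟩ := hv.pow n c
    refine ⟨d + c', ?_, ?_⟩
    · calc u * v ^ (n + 1) = u * v * v ^ n := by rw [pow_succ', mul_assoc]
        _ = v * u * (h ^ c * v ^ n) := by rw [hc]; group
        _ = v * (u * v ^ n) * h ^ c' := by rw [hc']; group
        _ = v ^ (n + 1) * u * h ^ (d + c') := by rw [hd, pow_succ', zpow_add]; group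
    · have : c'.natAbs ≤ max B Q := hc'B.trans (max_le_max_right _ hcB)
      have := Int.natAbs_add_le d c'
      rw [Nat.succ_mul]
      omega

def orderedProd (t : ℕ → G) : ℕ → (ℕ → ℕ) → G
  | 0, _ => 1
  | m + 1, e => t m ^ e m * orderedProd t m e

variable {t : ℕ → G}

theorem orderedProd_congr {m : ℕ} {e e' : ℕ → ℕ} (h : ∀ i < m, e i = e' i) :
    orderedProd t m e = orderedProd t m e' := by
  induction m with
  | zero => rfl
  | succ m ih => rw [orderedProd, orderedProd, h m m.lt_succ_self, ih fun i hi => h i (by omega)]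

theorem orderedProd_zero (m : ℕ) : orderedProd t m 0 = 1 := by
  induction m with
  | zero => rfl
  | succ m ih => simp [orderedProd, ih]

theorem MovesPow.orderedProd {m : ℕ} (ht : ∀ i < m, MovesPow h Q (t i)) (e : ℕ → ℕ) :
    MovesPow h Q (orderedProd t m e) := by
  induction m with
  | zero => exact movesPow_one
  | succ m ih => exact ((ht m m.lt_succ_self).pow (e m)).mul (ih fun i hi => ht i (by omega))

theorem exists_mul_orderedProd_eq {m : ℕ} (hmove : ∀ i < m, MovesPow h Q (t i))
    (hswap : ∀ i < m, ∀ j < m, CommutesUpTo h B (t i) (t j)) {j : ℕ} (hj : j < m)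
    (e : ℕ → ℕ) :
    ∃ d : ℤ, t j * orderedProd t m e = orderedProd t m (e + Pi.single j 1) * h ^ d ∧
      d.natAbs ≤ max B Q * (m + ∑ i ∈ Finset.range m, e i) := by
  induction m with
  | zero => omega
  | succ m ih =>
    rcases (Nat.lt_succ_iff_lt_or_eq.mp hj) with hj | rfl
    · have hmove' : ∀ i < m, MovesPow h Q (t i) := fun i hi => hmove i (by omega)
      obtain ⟨d₁, hd₁, hd₁B⟩ := (hswap j (by omega) m m.lt_succ_self).mul_pow
        (hmove m m.lt_succ_self) (e m)
      obtain ⟨d₂, hd₂, hd₂B⟩ := MovesPow.orderedProd hmove' e d₁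
      obtain ⟨d₃, hd₃, hd₃B⟩ := ih hmove' (fun i hi k hk => hswap i (by omega) k (by omega)) hj
      refine ⟨d₃ + d₂, ?_, ?_⟩
      · have hm : (e + Pi.single j 1 : ℕ → ℕ) m = e m := by simp [hj.ne']
        calc t j * orderedProd t (m + 1) e
            = t j * t m ^ e m * orderedProd t m e := by rw [orderedProd, mul_assoc]
          _ = t m ^ e m * t j * (h ^ d₁ * orderedProd t m e) := by rw [hd₁]; group
          _ = t m ^ e m * (t j * orderedProd t m e) * h ^ d₂ := by rw [hd₂]; group
          _ = orderedProd t (m + 1) (e + Pi.single j 1) * h ^ (d₃ + d₂) := by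
            rw [hd₃, orderedProd, hm, zpow_add]; group
      · have := Int.natAbs_add_le d₃ d₂
        have : d₂.natAbs ≤ (e m + 1) * max B Q :=
          hd₂B.trans (max_le (hd₁B.trans (Nat.mul_le_mul_right _ (Nat.le_succ _)))
            ((le_max_right B Q).trans (Nat.le_mul_of_pos_left _ (Nat.succ_pos _))))
        rw [Finset.sum_range_succ]
        linarith
    · refine ⟨0, ?_, by simp⟩
      have hrest : orderedProd t j (e + Pi.single j 1) = orderedProd t j e :=
        orderedProd_congr fun i hi => by simp [hi.ne]
      simp [orderedProd, hrest, pow_succ', mul_assoc]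

theorem exists_list_prod_eq {m : ℕ} (hmove : ∀ i < m, MovesPow h Q (t i))
    (hswap : ∀ i < m, ∀ j < m, CommutesUpTo h B (t i) (t j)) :
    ∀ l : List G, (∀ x ∈ l, ∃ i < m, t i = x) → ∃ (e : ℕ → ℕ) (s : ℤ),
      ∑ i ∈ Finset.range m, e i = l.length ∧
      s.natAbs ≤ max B Q * l.length * (m + l.length) ∧ l.prod = orderedProd t m e * h ^ s
  | [], _ => ⟨0, 0, by simp, by simp, by simp [orderedProd_zero]⟩
  | x :: l, hl => by
    obtain ⟨e, s, he, hsB, hs⟩ :=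
      exists_list_prod_eq hmove hswap l fun y hy => hl y (List.mem_cons_of_mem x hy)
    obtain ⟨j, hj, rfl⟩ := hl x List.mem_cons_self
    obtain ⟨d, hd, hdB⟩ := exists_mul_orderedProd_eq hmove hswap hj e
    refine ⟨e + Pi.single j 1, d + s, ?_, ?_, ?_⟩
    · simp [Finset.sum_add_distrib, Finset.sum_pi_single', hj, he]
    · have := Int.natAbs_add_le d s
      rw [he] at hdB
      have : max B Q * (l.length + 1) * (m + l.length) ≤
          max B Q * (l.length + 1) * (m + (l.length + 1)) := Nat.mul_le_mul_left _ (by omega)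
      simp only [List.length_cons]
      linarith
    · rw [List.prod_cons, hs, ← mul_assoc, hd, zpow_add, mul_assoc]

end Collection

section Growth

variable {G : Type*} [Group G] {S : Set G} {h : G} {Q B : ℕ}

theorem card_wordBall_le {m : ℕ} {t : ℕ → G} (hS : ∀ x ∈ S ∪ S⁻¹, ∃ i < m, t i = x)
    (hmove : ∀ i < m, MovesPow h Q (t i))
    (hswap : ∀ i < m, ∀ j < m, CommutesUpTo h B (t i) (t j)) (n : ℕ) :
    Nat.card (wordBall S n) ≤ (n + 1) ^ m * (2 * (max B Q * n * (m + n)) + 1) := by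
  classical
  set R := max B Q * n * (m + n)
  let f : (Fin m → ℕ) × ℤ → G := fun p =>
    orderedProd t m (fun i => if hi : i < m then p.1 ⟨i, hi⟩ else 0) * h ^ p.2
  let box := Fintype.piFinset (fun _ : Fin m => Finset.range (n + 1)) ×ˢ
    Finset.Icc (-(R : ℤ)) R
  have hsub : wordBall S n ⊆ box.image f := by
    rintro g ⟨l, hl, hlen, rfl⟩
    obtain ⟨e, s, he, hsR, hprod⟩ := exists_list_prod_eq hmove hswap l
      fun x hx => hS x (by simpa using hl x hx)
    refine Finset.mem_coe.mpr (Finset.mem_image.mpr ⟨(fun i => e i, s), ?_, ?_⟩)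
    · have he_le : ∀ i < m, e i ≤ n := fun i hi =>
        (Finset.single_le_sum (fun _ _ => Nat.zero_le _) (Finset.mem_range.mpr hi)).trans
          (he.trans_le hlen)
      have hsR' : s.natAbs ≤ R :=
        hsR.trans (Nat.mul_le_mul (Nat.mul_le_mul_left _ hlen) (by omega))
      simp only [box, Finset.mem_product, Fintype.mem_piFinset, Finset.mem_range,
        Finset.mem_Icc]
      exact ⟨fun i => Nat.lt_succ_of_le (he_le i i.2), by omega, by omega⟩
    · simp only [f, hprod]
      congr 1
      exact orderedProd_congr fun i hi => by simp [hi]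
  calc Nat.card (wordBall S n) ≤ Nat.card (box.image f : Set G) :=
        Nat.card_mono (Finset.finite_toSet _) hsub
    _ ≤ box.card := by rw [Nat.card_coe_set_eq, Set.ncard_coe_finset]; exact Finset.card_image_le
    _ = (n + 1) ^ m * (2 * R + 1) := by
        simp only [box, Finset.card_product, Fintype.card_piFinset, Finset.card_range,
          Finset.prod_const, Finset.card_univ, Fintype.card_fin, Int.card_Icc]
        rw [show ((R : ℤ) + 1 - -R).toNat = 2 * R + 1 by omega]

theorem growthRate_nonpos_of_mem_zpowers (hS : S.Finite)
    (hconj : ∀ x ∈ S ∪ S⁻¹, x⁻¹ * h * x ∈ zpowers h)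
    (hcomm : ∀ x ∈ S ∪ S⁻¹, ∀ y ∈ S ∪ S⁻¹, ⁅x, y⁆ ∈ zpowers h) : growthRate S ≤ 0 := by
  set L := hS.union hS.inv
  set letters := L.toFinset.toList
  set t : ℕ → G := fun i => letters.getD i 1
  set m := letters.length
  have hletter : ∀ i < m, t i ∈ S ∪ S⁻¹ := fun i hi => by
    rw [show t i = letters[i] from List.getD_eq_getElem _ _ hi]
    exact L.mem_toFinset.mp (Finset.mem_toList.mp (List.getElem_mem hi))
  have hS' : ∀ x ∈ S ∪ S⁻¹, ∃ i < m, t i = x := fun x hx => by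
    obtain ⟨i, hi, rfl⟩ := List.mem_iff_getElem.mp (Finset.mem_toList.mpr (L.mem_toFinset.mpr hx))
    exact ⟨i, hi, List.getD_eq_getElem _ _ hi⟩
  have hmove : ∀ i < m, MovesPow h (orderOf h) (t i) := fun i hi =>
    movesPow_of_conj_mem_zpowers (hconj _ (hletter i hi)) (by
      simpa using hconj _ (inv_mem_union_inv (hletter i hi)))
  obtain ⟨B, hB⟩ : ∃ B : ℕ, ∀ i < m, ∀ j < m, CommutesUpTo h B (t i) (t j) := by
    have hfin := Set.finite_lt_nat m
    suffices ∀ᶠ B in atTop, ∀ i ∈ {i | i < m}, ∀ j ∈ {j | j < m}, CommutesUpTo h B (t i) (t j)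
      from this.exists
    refine (hfin.eventually_all).mpr fun i hi => (hfin.eventually_all).mpr fun j hj => ?_
    -- `t i * t j = t j * t i * ⁅(t i)⁻¹, (t j)⁻¹⁆`
    obtain ⟨c, hc⟩ := mem_zpowers_iff.mp (hcomm _ (inv_mem_union_inv (hletter i hi))
      _ (inv_mem_union_inv (hletter j hj)))
    filter_upwards [eventually_ge_atTop c.natAbs] with B hB
    exact ⟨c, hB, by rw [hc, commutatorElement_def]; group⟩
  refine growthRate_nonpos_of_card_wordBall_le (C := 2 * (max B (orderOf h) * (m + 1)) + 1)
    (d := m + 2) fun n => (card_wordBall_le hS' hmove hB n).trans ?_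
  have hquad : max B (orderOf h) * n * (m + n) ≤ max B (orderOf h) * (m + 1) * (n + 1) ^ 2 := by
    rw [mul_assoc, mul_assoc]
    refine Nat.mul_le_mul_left _ ?_
    calc n * (m + n) ≤ (n + 1) * ((m + 1) * (n + 1)) :=
          Nat.mul_le_mul (Nat.le_succ n) (by nlinarith [Nat.zero_le (m * n)])
      _ = (m + 1) * (n + 1) ^ 2 := by ring
  calc (n + 1) ^ m * (2 * (max B (orderOf h) * n * (m + n)) + 1)
      ≤ (n + 1) ^ m * ((2 * (max B (orderOf h) * (m + 1)) + 1) * (n + 1) ^ 2) := by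
        gcongr
        nlinarith [hquad]
    _ = _ := by ring

end Growth

section FreeByAbelian

variable {F E : Type*} [Group F] [Group E]

def IsTwoFree (F : Type*) [Group F] : Prop :=
  ∀ a b : F, Function.Injective ⇑(FreeGroup.lift ![a, b] : FreeGroup (Fin 2) →* F) ∨
    ∃ c : F, a ∈ zpowers c ∧ b ∈ zpowers c

def HasMaximalCyclicCentralizers (F : Type*) [Group F] : Prop :=
  ∀ g : F, g ≠ 1 → (∃ b : F, centralizer {g} = zpowers b) ∧
    ∀ z : F, centralizer {g} ≤ zpowers z → centralizer {g} = zpowers z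

theorem centralizer_eq_of_mem_zpowers (hF : HasMaximalCyclicCentralizers F) {a z b : F}
    (ha : a ≠ 1) (hz : centralizer {a} = zpowers z) (hb : b ∈ zpowers z) (hb1 : b ≠ 1) :
    centralizer {b} = zpowers z := by
  obtain ⟨⟨w, hw⟩, -⟩ := hF b hb1
  have hzb : zpowers z ≤ centralizer {b} := by
    obtain ⟨k, rfl⟩ := mem_zpowers_iff.mp hb
    exact zpowers_le.mpr (mem_centralizer_singleton_iff.mpr (Commute.self_zpow z k).eq)
  rw [hw, ← (hF a ha).2 w (hz ▸ hw ▸ hzb), hz]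

theorem mem_zpowers_of_not_injective_lift (hF : IsTwoFree F) {ι : F →* E}
    (hι : Function.Injective ι) {a z : F} (hz : centralizer {a} = zpowers z) {g : E}
    (hg : g ∈ ι.range)
    (hnot : ¬ Function.Injective ⇑(FreeGroup.lift ![ι a, g] : FreeGroup (Fin 2) →* E)) :
    g ∈ zpowers (ι z) := by
  obtain ⟨d, rfl⟩ := hg
  rcases hF a d with hinj | ⟨c, hac, hdc⟩
  · refine absurd ?_ hnot
    have : (FreeGroup.lift ![ι a, ι d] : FreeGroup (Fin 2) →* E) =
        ι.comp (FreeGroup.lift ![a, d]) :=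
      FreeGroup.ext_hom _ _ (by simp [Fin.forall_fin_two])
    rw [this]
    exact hι.comp hinj
  · have hcz : c ∈ zpowers z := by
      obtain ⟨k, rfl⟩ := mem_zpowers_iff.mp hac
      exact hz ▸ mem_centralizer_singleton_iff.mpr (Commute.self_zpow c k).eq
    rw [← MonoidHom.map_zpowers]
    exact mem_map_of_mem ι (zpowers_le.mpr hcz hdc)

theorem mem_zpowers_of_commute (hF : HasMaximalCyclicCentralizers F) {ι : F →* E}
    (hι : Function.Injective ι) {a z : F} (ha : a ≠ 1) (hz : centralizer {a} = zpowers z)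
    {b y : E} (hb : b ∈ zpowers (ι z)) (hb1 : b ≠ 1) (hy : y ∈ ι.range) (hyb : Commute y b) :
    y ∈ zpowers (ι z) := by
  obtain ⟨k, rfl⟩ := mem_zpowers_iff.mp hb
  obtain ⟨y, rfl⟩ := hy
  have hcz : centralizer {z ^ k} = zpowers z :=
    centralizer_eq_of_mem_zpowers hF ha hz (zpow_mem_zpowers z k) fun h =>
      hb1 (by rw [← map_zpow, h, map_one])
  have hyz : y ∈ centralizer {z ^ k} :=
    mem_centralizer_singleton_iff.mpr (hι (by simpa using hyb.eq))
  rw [hcz] at hyz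
  rw [← MonoidHom.map_zpowers]
  exact mem_map_of_mem ι hyz

theorem exists_letters_normalize_zpowers (hF2 : IsTwoFree F)
    (hFc : HasMaximalCyclicCentralizers F) {ι : F →* E} (hι : Function.Injective ι)
    (hnormal : ∀ g ∈ ι.range, ∀ x : E, x⁻¹ * g * x ∈ ι.range)
    (hcomm : ∀ x y : E, ⁅x, y⁆ ∈ ι.range) {S : Set E}
    (hfree : ∀ a b : E, ShortWord S 6 a → ShortWord S 6 b →
      ¬ Function.Injective ⇑(FreeGroup.lift ![a, b] : FreeGroup (Fin 2) →* E)) :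
    ∃ h : E, (∀ x ∈ S ∪ S⁻¹, x⁻¹ * h * x ∈ zpowers h) ∧
      ∀ x ∈ S ∪ S⁻¹, ∀ y ∈ S ∪ S⁻¹, ⁅x, y⁆ ∈ zpowers h := by
  by_cases hab : ∃ x₀ ∈ S ∪ S⁻¹, ∃ y₀ ∈ S ∪ S⁻¹, ⁅x₀, y₀⁆ ≠ 1
  swap
  · push Not at hab
    exact ⟨1, fun x _ => by simp, fun x hx y hy => by simp [hab x hx y hy]⟩
  obtain ⟨x₀, hx₀, y₀, hy₀, hne⟩ := hab
  obtain ⟨a, ha⟩ := hcomm x₀ y₀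
  have ha4 : ShortWord S 4 (ι a) := ha ▸ ShortWord.commutatorElement hx₀ hy₀
  have ha1 : a ≠ 1 := by rintro rfl; exact hne (by rw [← ha, map_one])
  obtain ⟨⟨z, hz⟩, -⟩ := hFc a ha1
  have hshort : ∀ g, ShortWord S 6 g → g ∈ ι.range → g ∈ zpowers (ι z) := fun g hg hgι =>
    mem_zpowers_of_not_injective_lift hF2 hι hz hgι (hfree _ g (ha4.mono (by norm_num)) hg)
  refine ⟨ι z, fun x hx => ?_, fun x hx y hy =>
    hshort _ ((ShortWord.commutatorElement hx hy).mono (by norm_num)) (hcomm x y)⟩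
  have haz : Commute (ι z) (ι a) := by
    obtain ⟨k, hk⟩ := mem_zpowers_iff.mp (hshort _ (ha4.mono (by norm_num)) ⟨a, rfl⟩)
    exact hk ▸ Commute.self_zpow _ k
  have hconj : x⁻¹ * ι a * x ∈ zpowers (ι z) :=
    hshort _ (ha4.conj hx) (hnormal _ ⟨a, rfl⟩ x)
  have hconj1 : x⁻¹ * ι a * x ≠ 1 := fun h1 => ha1 <| hι <|
    calc ι a = x * (x⁻¹ * ι a * x) * x⁻¹ := by group
      _ = ι 1 := by rw [h1, map_one]; group
  exact mem_zpowers_of_commute hFc hι ha1 hz hconj hconj1 (hnormal _ ⟨z, rfl⟩ x)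
    (by simpa using haz.conj x⁻¹)

end FreeByAbelian

theorem two_free_by_abelian_general {F E A : Type*} [Group F] [Group E] [CommGroup A]
    (h2free : ∀ a b : F,
      Function.Injective ⇑(FreeGroup.lift ![a, b] : FreeGroup (Fin 2) →* F) ∨
      ∃ c : F, a ∈ Subgroup.zpowers c ∧ b ∈ Subgroup.zpowers c)
    (hhyp : ∀ g : F, g ≠ 1 →
      (∃ b : F, Subgroup.centralizer {g} = Subgroup.zpowers b) ∧
      ∀ z : F, Subgroup.centralizer {g} ≤ Subgroup.zpowers z →
        Subgroup.centralizer {g} = Subgroup.zpowers z)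
    (ι : F →* E) (hι : Function.Injective ι)
    (φ : E →* A) (hexact : ι.range = φ.ker)
    (T : Finset E) (hexp : 0 < growthRate (T : Set E)) :
    ∃ a b : E, ShortWord (T : Set E) 6 a ∧ ShortWord (T : Set E) 6 b ∧
      Function.Injective ⇑(FreeGroup.lift ![a, b] : FreeGroup (Fin 2) →* E) := by
  by_contra hfree
  push Not at hfree
  have hnormal : ∀ g ∈ ι.range, ∀ x : E, x⁻¹ * g * x ∈ ι.range := by
    intro g hg x
    have := (hexact ▸ φ.normal_ker : ι.range.Normal).conj_mem g hg x⁻¹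
    rwa [inv_inv] at this
  have hcomm : ∀ x y : E, ⁅x, y⁆ ∈ ι.range := fun x y => by
    rw [hexact, MonoidHom.mem_ker, map_commutatorElement, commutatorElement_eq_one_iff_commute]
    exact Commute.all _ _
  obtain ⟨h, hconj, hcomm'⟩ :=
    exists_letters_normalize_zpowers h2free hhyp hι hnormal hcomm hfree
  exact (growthRate_nonpos_of_mem_zpowers T.finite_toSet hconj hcomm').not_gt hexp

/-- Let F be a 2-free word-hyperbolic group (2-freeness: every pair
is a free basis or lies in a cyclic subgroup; hyperbolicity encoded via the
property that centralizers of nontrivial elements are maximal cyclic), A abelian,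
and 1 → F → E → A → 1 exact.  If the subgroup generated by a finite set T ⊆ E has
exponential growth, then some pair of words of T-length at most 6 freely generates
a nonabelian free subgroup. -/
theorem two_free_by_abelian {F E A : Type*} [Group F] [Group E] [CommGroup A]
    (h2free : ∀ a b : F,
      Function.Injective ⇑(FreeGroup.lift ![a, b] : FreeGroup (Fin 2) →* F) ∨
      ∃ c : F, a ∈ Subgroup.zpowers c ∧ b ∈ Subgroup.zpowers c)
    (hhyp : ∀ g : F, g ≠ 1 →
      (∃ b : F, Subgroup.centralizer {g} = Subgroup.zpowers b) ∧
      ∀ z : F, Subgroup.centralizer {g} ≤ Subgroup.zpowers z →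
        Subgroup.centralizer {g} = Subgroup.zpowers z)
    (ι : F →* E) (hι : Function.Injective ι)
    (φ : E →* A) (hφ : Function.Surjective φ) (hexact : ι.range = φ.ker)
    (T : Finset E) (hexp : 0 < growthRate (T : Set E)) :
    ∃ a b : E, ShortWord (T : Set E) 6 a ∧ ShortWord (T : Set E) 6 b ∧
      Function.Injective ⇑(FreeGroup.lift ![a, b] : FreeGroup (Fin 2) →* E) :=
  two_free_by_abelian_general h2free hhyp ι hι φ hexact T hexp
end

section
/- Let G be a cyclic-by-abelian group, i.e., G has a normal cyclic subgroup C with G/C abelian. Then G does not have exponential growth (indeed, G is virtually nilpotent). -/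
section

open scoped Pointwise commutatorElement

variable {G : Type*} [Group G]

section WordBall

variable {S : Set G} {m n : ℕ}

lemma mem_wordBall_one_of_mem {s : G} (hs : s ∈ S) : s ∈ wordBall S 1 :=
  ⟨[s], by simp [hs], le_rfl, List.prod_singleton⟩

lemma one_mem_wordBall (S : Set G) (n : ℕ) : (1 : G) ∈ wordBall S n :=
  ⟨[], by simp, by simp, rfl⟩

lemma wordBall_mono (h : m ≤ n) : wordBall S m ⊆ wordBall S n :=
  fun _ ⟨l, hl, hlen, hprod⟩ => ⟨l, hl, hlen.trans h, hprod⟩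

lemma mul_mem_wordBall {g h : G} (hg : g ∈ wordBall S m) (hh : h ∈ wordBall S n) :
    g * h ∈ wordBall S (m + n) := by
  obtain ⟨l, hl, hlen, rfl⟩ := hg
  obtain ⟨l', hl', hlen', rfl⟩ := hh
  refine ⟨l ++ l', ?_, by simp; omega, List.prod_append⟩
  simpa only [List.mem_append] using fun x hx => hx.elim (hl x) (hl' x)

lemma conj_mem_wordBall (hS : ∀ g, ∀ s ∈ S, g * s * g⁻¹ ∈ S) (g : G) {c : G}
    (hc : c ∈ wordBall S n) : g * c * g⁻¹ ∈ wordBall S n := by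
  obtain ⟨l, hl, hlen, rfl⟩ := hc
  refine ⟨l.map (MulAut.conj g), ?_, by simpa using hlen,
    (map_list_prod (MulAut.conj g) l).symm⟩
  simp only [List.mem_map]
  rintro _ ⟨x, hx, rfl⟩
  rcases hl x hx with h | h
  · exact Or.inl (hS g x h)
  · exact Or.inr (by simpa [mul_assoc] using hS g x⁻¹ h)

lemma wordBall_one_subset_one (n : ℕ) : wordBall (1 : Set G) n ⊆ 1 := by
  rintro _ ⟨l, hl, -, rfl⟩
  exact Set.mem_one.mpr (List.prod_eq_one fun x hx => by simpa using hl x hx)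

end WordBall

def orderedPowers (L : List G) (n : ℕ) : Set G :=
  (L.map fun u => (u ^ ·) '' Set.Iic n).prod

section OrderedPowers

variable {L : List G} {m n : ℕ}

@[simp] lemma orderedPowers_nil (n : ℕ) : orderedPowers ([] : List G) n = 1 := rfl

lemma orderedPowers_mono (h : m ≤ n) : orderedPowers L m ⊆ orderedPowers L n := by
  induction L with
  | nil => rfl
  | cons u L ih =>
    exact Set.mul_subset_mul (Set.image_mono (Set.Iic_subset_Iic.mpr h)) ih

lemma one_mem_orderedPowers (L : List G) (n : ℕ) : (1 : G) ∈ orderedPowers L n := by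
  induction L with
  | nil => exact Set.one_mem_one
  | cons u L ih => exact ⟨1, ⟨0, Nat.zero_le n, pow_zero u⟩, 1, ih, mul_one 1⟩

lemma orderedPowers_finite (L : List G) (n : ℕ) : (orderedPowers L n).Finite := by
  induction L with
  | nil => exact Set.finite_one
  | cons u L ih => exact ((Set.finite_Iic n).image _).mul ih

lemma natCard_orderedPowers_le (L : List G) (n : ℕ) :
    Nat.card (orderedPowers L n) ≤ (n + 1) ^ L.length := by
  induction L with
  | nil => simp
  | cons u L ih =>
    calc Nat.card (orderedPowers (u :: L) n)
        ≤ Nat.card ((u ^ ·) '' Set.Iic n) * Nat.card (orderedPowers L n) := Set.natCard_mul_le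
      _ ≤ (n + 1) * (n + 1) ^ L.length := by
        gcongr
        exact (Nat.card_image_le (Set.finite_Iic n)).trans (by simp)
      _ = (n + 1) ^ (u :: L).length := by rw [List.length_cons, pow_succ']

end OrderedPowers

section Collection

variable {K : Set G}

lemma commutatorElement_pow_mem_wordBall (hK : ∀ g, ∀ k ∈ K, g * k * g⁻¹ ∈ K) {x u : G}
    (hxu : ⁅x, u⁆ ∈ K) (a : ℕ) : ⁅x, u ^ a⁆ ∈ wordBall K a := by
  induction a with
  | zero => simpa using one_mem_wordBall K 0
  | succ a ih =>
    have hsplit : ⁅x, u ^ (a + 1)⁆ = ⁅x, u ^ a⁆ * (u ^ a * ⁅x, u⁆ * (u ^ a)⁻¹) := by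
      simp only [commutatorElement_def, pow_succ]; group
    rw [hsplit]
    exact mul_mem_wordBall ih (mem_wordBall_one_of_mem (hK _ _ hxu))

lemma smul_orderedPowers_subset (hK : ∀ g, ∀ k ∈ K, g * k * g⁻¹ ∈ K) {L : List G}
    (hL : ∀ x ∈ L, ∀ y ∈ L, ⁅x, y⁆ ∈ K) {x : G} (hx : x ∈ L) (m : ℕ) :
    x • orderedPowers L m ⊆ wordBall K (L.length * m) * orderedPowers L (m + 1) := by
  induction L with
  | nil => simp at hx
  | cons u L ih =>
    rintro _ ⟨_, hw₀, rfl⟩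
    obtain ⟨_, ⟨a, ha, rfl⟩, w, hw, rfl⟩ := Set.mem_mul.mp hw₀
    rw [Set.mem_Iic] at ha
    by_cases hxu : x = u
    · subst hxu
      refine ⟨1, one_mem_wordBall _ _, x ^ (a + 1) * w,
        Set.mul_mem_mul ⟨a + 1, by simpa using ha, rfl⟩ (orderedPowers_mono m.le_succ hw), ?_⟩
      simp [pow_succ', mul_assoc]
    · have hxL : x ∈ L := (List.mem_cons.mp hx).resolve_left hxu
      obtain ⟨c, hc, w', hw', hxw⟩ :=
        Set.mem_mul.mp (ih (fun y hy z hz => hL y (by simp [hy]) z (by simp [hz])) hxL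
          (Set.smul_mem_smul_set hw))
      have hcomm := commutatorElement_pow_mem_wordBall hK (hL x hx u (by simp)) a
      refine ⟨⁅x, u ^ a⁆ * (u ^ a * c * (u ^ a)⁻¹), ?_, u ^ a * w',
        Set.mul_mem_mul ⟨a, by simpa using ha.trans m.le_succ, rfl⟩ hw', ?_⟩
      · refine wordBall_mono (le_of_eq ?_) (mul_mem_wordBall (wordBall_mono ha hcomm)
          (conj_mem_wordBall hK _ hc))
        simp only [List.length_cons]; ring
      · rw [eq_mul_inv_of_mul_eq hxw, commutatorElement_def]; simp only [smul_eq_mul]; group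

lemma list_prod_mem_mul_orderedPowers (hK : ∀ g, ∀ k ∈ K, g * k * g⁻¹ ∈ K) {L : List G}
    (hL : ∀ x ∈ L, ∀ y ∈ L, ⁅x, y⁆ ∈ K) {l : List G} (hl : ∀ x ∈ l, x ∈ L) :
    l.prod ∈ wordBall K (L.length * l.length ^ 2) * orderedPowers L l.length := by
  induction l with
  | nil => simpa using Set.mul_mem_mul (one_mem_wordBall K 0) (one_mem_orderedPowers L 0)
  | cons x l ih =>
    obtain ⟨c, hc, w, hw, hprod⟩ := Set.mem_mul.mp (ih fun y hy => hl y (by simp [hy]))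
    obtain ⟨c', hc', w', hw', hxw⟩ := Set.mem_mul.mp
      (smul_orderedPowers_subset hK hL (hl x (by simp)) l.length (Set.smul_mem_smul_set hw))
    refine ⟨x * c * x⁻¹ * c', ?_, w', hw', ?_⟩
    · refine wordBall_mono ?_ (mul_mem_wordBall (conj_mem_wordBall hK x hc) hc')
      simp only [List.length_cons]; nlinarith
    · rw [List.prod_cons, ← hprod, eq_mul_inv_of_mul_eq hxw, smul_eq_mul]; group

end Collection

section Counting

variable {S K : Set G} {L : List G}

lemma wordBall_subset_mul_orderedPowers (hK : ∀ g, ∀ k ∈ K, g * k * g⁻¹ ∈ K)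
    (hLK : ∀ x ∈ L, ∀ y ∈ L, ⁅x, y⁆ ∈ K) (hSL : ∀ x ∈ S ∪ S⁻¹, x ∈ L) (n : ℕ) :
    wordBall S n ⊆ wordBall K (L.length * n ^ 2) * orderedPowers L n := by
  rintro _ ⟨l, hl, hlen, rfl⟩
  exact Set.mul_subset_mul (wordBall_mono (by gcongr)) (orderedPowers_mono hlen)
    (list_prod_mem_mul_orderedPowers hK hLK fun x hx => hSL x (hl x hx))

lemma wordBall_subset_orderedPowers_of_commute (hL : ∀ x ∈ L, ∀ y ∈ L, Commute x y)
    (hSL : ∀ x ∈ S ∪ S⁻¹, x ∈ L) (n : ℕ) : wordBall S n ⊆ orderedPowers L n := by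
  have hLK : ∀ x ∈ L, ∀ y ∈ L, ⁅x, y⁆ ∈ (1 : Set G) := fun x hx y hy =>
    Set.mem_one.mpr (commutatorElement_eq_one_iff_commute.mpr (hL x hx y hy))
  calc wordBall S n ⊆ wordBall 1 (L.length * n ^ 2) * orderedPowers L n :=
        wordBall_subset_mul_orderedPowers (by simp) hLK hSL n
    _ ⊆ 1 * orderedPowers L n := Set.mul_subset_mul_right (wordBall_one_subset_one _)
    _ = orderedPowers L n := one_mul _

lemma natCard_wordBall_le_of_commute (hL : ∀ x ∈ L, ∀ y ∈ L, Commute x y)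
    (hSL : ∀ x ∈ S ∪ S⁻¹, x ∈ L) (n : ℕ) : Nat.card (wordBall S n) ≤ (n + 1) ^ L.length :=
  (Nat.card_mono (orderedPowers_finite L n)
    (wordBall_subset_orderedPowers_of_commute hL hSL n)).trans (natCard_orderedPowers_le L n)

lemma natCard_wordBall_le_natCard_wordBall_mul (hK : ∀ g, ∀ k ∈ K, g * k * g⁻¹ ∈ K)
    (hLK : ∀ x ∈ L, ∀ y ∈ L, ⁅x, y⁆ ∈ K) (hSL : ∀ x ∈ S ∪ S⁻¹, x ∈ L) (n : ℕ)
    (hfin : (wordBall K (L.length * n ^ 2)).Finite) :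
    Nat.card (wordBall S n) ≤ Nat.card (wordBall K (L.length * n ^ 2)) * (n + 1) ^ L.length :=
  calc Nat.card (wordBall S n)
      ≤ Nat.card (wordBall K (L.length * n ^ 2) * orderedPowers L n) :=
        Nat.card_mono (hfin.mul (orderedPowers_finite L n))
          (wordBall_subset_mul_orderedPowers hK hLK hSL n)
    _ ≤ _ := Set.natCard_mul_le.trans (Nat.mul_le_mul_left _ (natCard_orderedPowers_le L n))

lemma exists_natCard_wordBall_le_poly (hS : S.Finite) (hKfin : K.Finite)
    (hK : ∀ g, ∀ k ∈ K, g * k * g⁻¹ ∈ K) (hKcomm : ∀ x ∈ K, ∀ y ∈ K, Commute x y)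
    (hSK : ∀ x ∈ S ∪ S⁻¹, ∀ y ∈ S ∪ S⁻¹, ⁅x, y⁆ ∈ K) :
    ∃ c d : ℕ, 0 < c ∧ ∀ n, Nat.card (wordBall S n) ≤ c * (n + 1) ^ d := by
  classical
  set L := (hS.union hS.inv).toFinset.toList
  set M := (hKfin.union hKfin.inv).toFinset.toList
  have hSL : ∀ x ∈ S ∪ S⁻¹, x ∈ L := by simp [L]
  have hLK : ∀ x ∈ L, ∀ y ∈ L, ⁅x, y⁆ ∈ K := fun x hx y hy =>
    hSK x (by simpa [L] using hx) y (by simpa [L] using hy)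
  have hKM : ∀ x ∈ K ∪ K⁻¹, x ∈ M := by simp [M]
  have hM : ∀ x ∈ M, ∀ y ∈ M, Commute x y := by
    have hcomm : ∀ x ∈ K ∪ K⁻¹, ∀ y ∈ K, Commute x y := by
      rintro x (hx | hx) y hy
      · exact hKcomm x hx y hy
      · simpa using (hKcomm _ hx y hy).inv_left
    intro x hx y hy
    rcases (by simpa [M] using hy : y ∈ K ∪ K⁻¹) with hy | hy
    · exact hcomm x (by simpa [M] using hx) y hy
    · simpa using (hcomm x (by simpa [M] using hx) _ hy).inv_right
  refine ⟨(L.length + 1) ^ M.length, 2 * M.length + L.length, by positivity, fun n => ?_⟩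
  calc Nat.card (wordBall S n)
      ≤ Nat.card (wordBall K (L.length * n ^ 2)) * (n + 1) ^ L.length :=
        natCard_wordBall_le_natCard_wordBall_mul hK hLK hSL n ((orderedPowers_finite M _).subset
          (wordBall_subset_orderedPowers_of_commute hM hKM _))
    _ ≤ (L.length * n ^ 2 + 1) ^ M.length * (n + 1) ^ L.length := by
        gcongr; exact natCard_wordBall_le_of_commute hM hKM _
    _ ≤ ((L.length + 1) * (n + 1) ^ 2) ^ M.length * (n + 1) ^ L.length := by
        gcongr; nlinarith [Nat.zero_le (L.length * n)]
    _ = (L.length + 1) ^ M.length * (n + 1) ^ (2 * M.length + L.length) := by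
        rw [mul_pow, ← pow_mul, pow_add, mul_assoc, mul_comm 2]

end Counting

open Filter Topology in
lemma growthRate_eq_zero_of_natCard_wordBall_le {S : Set G} {c d : ℕ} (hc : 0 < c)
    (h : ∀ n, Nat.card (wordBall S n) ≤ c * (n + 1) ^ d) : growthRate S = 0 := by
  have hnonneg : ∀ n : ℕ+, 0 ≤ Real.log (Nat.card (wordBall S n)) / ((n : ℕ) : ℝ) :=
    fun n => div_nonneg (Real.log_natCast_nonneg _) (Nat.cast_nonneg _)
  refine le_antisymm ?_ (le_ciInf hnonneg)
  have hlog : Tendsto (fun n : ℕ => Real.log ((n : ℝ) + 1) / n) atTop (𝓝 0) := by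
    have := (Real.tendsto_pow_log_div_mul_add_atTop 1 (-1) 1 one_ne_zero).comp
      (tendsto_atTop_add_const_right atTop 1 tendsto_natCast_atTop_atTop)
    simpa [Function.comp_def] using this
  have hlim : Tendsto (fun n : ℕ => (Real.log c + d * Real.log ((n : ℝ) + 1)) / n)
      atTop (𝓝 0) := by
    simpa [add_div, mul_div_assoc] using
      (tendsto_const_div_atTop_nhds_zero_nat (Real.log c)).add (hlog.const_mul (d : ℝ))
  refine ge_of_tendsto hlim ((eventually_ge_atTop 1).mono fun n hn => ?_)
  have hball :
      Real.log (Nat.card (wordBall S n)) ≤ Real.log c + d * Real.log ((n : ℝ) + 1) := by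
    rw [← Real.log_pow, ← Real.log_mul (by positivity) (by positivity)]
    rcases Nat.eq_zero_or_pos (Nat.card (wordBall S n)) with h0 | hpos
    · rw [h0, Nat.cast_zero, Real.log_zero]
      exact Real.log_nonneg (by norm_cast; nlinarith [Nat.one_le_pow d (n + 1) n.succ_pos])
    · exact Real.log_le_log (by exact_mod_cast hpos) (by exact_mod_cast h n)
  calc growthRate S ≤ Real.log (Nat.card (wordBall S n)) / n :=
        ciInf_le ⟨0, Set.forall_mem_range.mpr hnonneg⟩ (⟨n, hn⟩ : ℕ+)
    _ ≤ _ := div_le_div_of_nonneg_right hball (Nat.cast_nonneg n)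

lemma IsCyclic.finite_mulAut (H : Type*) [Group H] [IsCyclic H] : Finite (MulAut H) :=
  Finite.of_equiv _ (IsCyclic.mulAutMulEquiv H).symm.toEquiv

section NormalSubgroup

variable (C : Subgroup G) [C.Normal]

lemma finiteIndex_centralizer_of_finite_mulAut [Finite (MulAut C)] :
    (Subgroup.centralizer (C : Set G)).FiniteIndex := by
  refine Subgroup.finiteIndex_of_le (H := (MulAut.conjNormal (H := C)).ker) fun g hg => ?_
  refine Subgroup.mem_centralizer_iff.mpr fun h hh => ?_
  have hfix : g * h * g⁻¹ = h := by
    rw [← MulAut.conjNormal_apply g ⟨h, hh⟩, MonoidHom.mem_ker.mp hg, MulAut.one_apply]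
  exact eq_mul_inv_iff_mul_eq.mp hfix.symm

lemma isNilpotent_centralizer_of_commute (hab : ∀ x y : G ⧸ C, Commute x y) :
    Group.IsNilpotent (Subgroup.centralizer (C : Set G)) := by
  let _ : CommGroup (G ⧸ C) :=
    { (inferInstance : Group (G ⧸ C)) with mul_comm := fun x y => (hab x y).eq }
  refine Subgroup.isNilpotent_of_ker_le_center
    ((QuotientGroup.mk' C).comp (Subgroup.centralizer (C : Set G)).subtype) fun x hx => ?_
  rw [MonoidHom.mem_ker, MonoidHom.comp_apply, QuotientGroup.mk'_apply,
    QuotientGroup.eq_one_iff] at hx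
  exact Subgroup.mem_center_iff.mpr fun y =>
    Subtype.ext (Subgroup.mem_centralizer_iff.mp y.2 x hx).symm

lemma commutatorElement_mem_of_commute (hab : ∀ x y : G ⧸ C, Commute x y) (x y : G) :
    ⁅x, y⁆ ∈ C := by
  rw [← QuotientGroup.eq_one_iff, ← QuotientGroup.mk'_apply, map_commutatorElement,
    commutatorElement_eq_one_iff_commute]
  exact hab _ _

lemma finite_conjugatesOfSet [Finite (MulAut C)] {s : Set G} (hs : s.Finite) (hsC : s ⊆ C) :
    (Group.conjugatesOfSet s).Finite :=
  hs.biUnion fun a ha => (Set.finite_range fun φ : MulAut C => (φ ⟨a, hsC ha⟩ : G)).subset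
    fun b hb => by
      obtain ⟨g, rfl⟩ := isConj_iff.mp hb
      exact ⟨MulAut.conjNormal g, MulAut.conjNormal_apply g _⟩

lemma exists_natCard_wordBall_le_poly_of_isCyclic (hC : IsCyclic C)
    (hab : ∀ x y : G ⧸ C, Commute x y) {S : Set G} (hS : S.Finite) :
    ∃ c d : ℕ, 0 < c ∧ ∀ n, Nat.card (wordBall S n) ≤ c * (n + 1) ^ d := by
  have := IsCyclic.finite_mulAut C
  have hT := hS.union hS.inv
  set K := Group.conjugatesOfSet (Set.image2 (⁅·, ·⁆) (S ∪ S⁻¹) (S ∪ S⁻¹))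
  have hKC : K ⊆ C := Group.conjugatesOfSet_subset (by
    rintro _ ⟨x, -, y, -, rfl⟩
    exact commutatorElement_mem_of_commute C hab x y)
  have hKcomm : ∀ x ∈ K, ∀ y ∈ K, Commute x y := fun x hx y hy =>
    congrArg Subtype.val (hC.commGroup.mul_comm ⟨x, hKC hx⟩ ⟨y, hKC hy⟩)
  exact exists_natCard_wordBall_le_poly hS
    (finite_conjugatesOfSet C (hT.image2 _ hT)
      fun _ hk => hKC (Group.subset_conjugatesOfSet hk))
    (fun g k hk => Group.conj_mem_conjugatesOfSet hk) hKcomm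
    (fun x hx y hy => Group.subset_conjugatesOfSet ⟨x, hx, y, hy, rfl⟩)

end NormalSubgroup

end

/-- A cyclic-by-abelian group is virtually nilpotent and has no
finite generating set of positive exponential growth rate. -/
theorem cyclic_by_abelian_not_exponential {G : Type*} [Group G]
    (C : Subgroup G) [C.Normal] (hC : IsCyclic ↥C)
    (hab : ∀ x y : G ⧸ C, Commute x y) :
    (∃ H : Subgroup G, H.FiniteIndex ∧ Group.IsNilpotent ↥H) ∧
    ∀ S : Finset G, Subgroup.closure (S : Set G) = ⊤ →
      growthRate (S : Set G) = 0 := by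
  have := IsCyclic.finite_mulAut C
  refine ⟨⟨_, finiteIndex_centralizer_of_finite_mulAut C,
    isNilpotent_centralizer_of_commute C hab⟩, fun S _ => ?_⟩
  obtain ⟨c, d, hc, hball⟩ := exists_natCard_wordBall_le_poly_of_isCyclic C hC hab S.finite_toSet
  exact growthRate_eq_zero_of_natCard_wordBall_le hc hball
end

section
/- Let G be a group with a normal subgroup N that satisfies a group law. If every subgroup of G/N either satisfies a fixed group law or contains an N'-short nonabelian free subgroup with respect to every finite generating set, then every subgroup H of G either satisfies a (composite) group law or contains a short nonabelian free subgroup; moreover, if a subgroup H ≤ G contains a nonabelian free subgroup F of rank 2, then the image of F in G/N is free of rank 2 (the intersection F ∩ N is trivial). -/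
/-!
If `a, b` freely generate a free subgroup `F` of `G`, then `F ∩ N` is a normal subgroup of
`F ≅ F₂` satisfying the law `w_N`. By Nielsen–Schreier it is free. If it has two free generators
it contains a copy of `F₂`, hence of every free group of finite rank (the conjugates
`a^k b a^{-k}` are free, as one sees in `F₂ ≅ F(ℤ) ⋊ ℤ`), and so satisfies no nontrivial law. If
it is cyclic, normality forces the squares of `a` and `b` to centralize its generator, and the
centralizer of `{a², b²}` in `F₂` is trivial. Hence `F ∩ N = 1`.

The alternative for the subgroups of `G` is pulled back from `G ⧸ N`: short words lift along the
projection and so does a free pair, while if the image of a subgroup satisfies `w'`, the values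
of `w'` on it lie in `N`, where `w_N` vanishes.
-/

namespace FreeGroup

theorem lift_comp_apply {α G K : Type*} [Group G] [Group K] (φ : G →* K) (f : α → G)
    (x : FreeGroup α) : lift (φ ∘ f) x = φ (lift f x) := by
  induction x using FreeGroup.induction_on <;> simp_all

theorem injective_lift_of_map_pair {G K : Type*} [Group G] [Group K] (φ : G →* K)
    {a b : G} (h : Function.Injective (lift ![φ a, φ b])) : Function.Injective (lift ![a, b]) := by
  have : lift ![φ a, φ b] = φ.comp (lift ![a, b]) := by ext i; fin_cases i <;> simp
  rw [this, MonoidHom.coe_comp] at h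
  exact h.of_comp

/-- The composite law `v ∘ w`. -/
def compWord {α β : Type*} (v : FreeGroup α) (w : FreeGroup β) : FreeGroup (α × β) :=
  lift (fun i => map (fun j => (i, j)) w) v

theorem lift_compWord {α β G : Type*} [Group G] (f : α × β → G) (v : FreeGroup α)
    (w : FreeGroup β) : lift f (compWord v w) = lift (fun i => lift (fun j => f (i, j)) w) v := by
  rw [compWord, ← lift_comp_apply]
  congr 2
  ext i
  simp [map_eq_lift, ← lift_comp_apply, Function.comp_def]

theorem toWord_map {α β : Type*} [DecidableEq α] [DecidableEq β] {f : α → β}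
    (hf : Function.Injective f) (x : FreeGroup α) :
    (map f x).toWord = x.toWord.map (Prod.map f id) := by
  conv_lhs => rw [← mk_toWord (x := x)]
  rw [map.mk, toWord_mk]
  apply IsReduced.reduce_eq
  have hx : IsReduced x.toWord := isReduced_toWord
  unfold IsReduced at hx ⊢
  rw [List.isChain_map]
  exact hx.imp fun a b h hab => h (hf hab)

theorem eq_one_of_map_add_right_eq_self {m : ℤ} (hm : m ≠ 0) {w : FreeGroup ℤ}
    (hw : map (· + m) w = w) : w = 1 := by
  -- the shift adds `m` to the sum of the letters of the reduced word once per letter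
  have h := congrArg (fun x => (x.toWord.map Prod.fst).sum) hw
  have hsum : (w.toWord.map fun p => p.1 + m).sum =
      (w.toWord.map Prod.fst).sum + w.toWord.length * m := by
    rw [List.sum_map_add]
    simp
  simp only [toWord_map (add_left_injective m), List.map_map] at h
  simpa [Function.comp_def, hsum, hm] using h

def shiftAut : Multiplicative ℤ →* MulAut (FreeGroup ℤ) :=
  MonoidHom.mk' (fun n => freeGroupCongr (Equiv.addRight n.toAdd)) fun m n => by
    ext k
    simp only [toAdd_mul, MulAut.mul_apply, freeGroupCongr_apply, map.comp]
    congr 1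
    ext x
    simp [add_comm]

@[simp] lemma shiftAut_apply (n : Multiplicative ℤ) (w : FreeGroup ℤ) :
    shiftAut n w = map (· + n.toAdd) w := rfl

open SemidirectProduct

def toShiftSemidirect : FreeGroup (Fin 2) →* FreeGroup ℤ ⋊[shiftAut] Multiplicative ℤ :=
  lift ![inr (Multiplicative.ofAdd 1), inl (of 0)]

def ofShiftSemidirect : FreeGroup ℤ ⋊[shiftAut] Multiplicative ℤ →* FreeGroup (Fin 2) :=
  SemidirectProduct.lift (lift fun k => of 0 ^ k * of 1 * (of 0 ^ k)⁻¹)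
    (zpowersHom _ (of 0)) fun n => by
      ext k
      simp [-map_zpow, MulAut.conj_apply, zpow_add]
      group

lemma toShiftSemidirect_of_zero_zpow (k : ℤ) :
    toShiftSemidirect (of 0 ^ k) = inr (Multiplicative.ofAdd k) := by
  rw [map_zpow, toShiftSemidirect, lift_apply_of, Matrix.cons_val_zero, ← map_zpow,
    ← ofAdd_zsmul, smul_eq_mul, mul_one]

lemma toShiftSemidirect_of_one : toShiftSemidirect (of 1) = inl (of 0) := by
  simp [toShiftSemidirect]

/-- `F(a, b) ≅ F(ℤ) ⋊ ℤ`, where `ℤ` shifts the generators `x_k`: `a` is the generator of `ℤ` and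
`a^k b a^{-k}` corresponds to `x_k`. -/
def finTwoEquivShiftSemidirect :
    FreeGroup (Fin 2) ≃* FreeGroup ℤ ⋊[shiftAut] Multiplicative ℤ :=
  MonoidHom.toMulEquiv toShiftSemidirect ofShiftSemidirect
    (by ext i; fin_cases i <;> simp [toShiftSemidirect, ofShiftSemidirect])
    (by
      refine SemidirectProduct.hom_ext (ext_hom _ _ fun k => ?_) (MonoidHom.ext_mint ?_)
      · simp only [ofShiftSemidirect, MonoidHom.comp_apply, lift_inl, lift_apply_of,
          _root_.map_mul, _root_.map_inv, toShiftSemidirect_of_zero_zpow,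
          toShiftSemidirect_of_one]
        rw [← _root_.map_inv, ← inl_aut]
        simp
      · simp [toShiftSemidirect, ofShiftSemidirect])

theorem lift_conj_zpow_injective :
    Function.Injective (lift fun k : ℤ => of (0 : Fin 2) ^ k * of 1 * (of 0 ^ k)⁻¹) := by
  have : (lift fun k : ℤ => of (0 : Fin 2) ^ k * of 1 * (of 0 ^ k)⁻¹) =
      finTwoEquivShiftSemidirect.symm.toMonoidHom.comp inl := by
    ext k
    simp [finTwoEquivShiftSemidirect, ofShiftSemidirect]
  rw [this]
  exact finTwoEquivShiftSemidirect.symm.injective.comp inl_injective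

theorem eq_one_of_commute_zpow {m : ℤ} (hm : m ≠ 0) {z : FreeGroup (Fin 2)}
    (h₀ : Commute (of 0 ^ m) z) (h₁ : Commute (of 1 ^ m) z) : z = 1 := by
  have h₀' := congrArg left (h₀.map finTwoEquivShiftSemidirect).eq
  have h₁' := congrArg left (h₁.map finTwoEquivShiftSemidirect).eq
  rw [← finTwoEquivShiftSemidirect.map_eq_one_iff]
  generalize finTwoEquivShiftSemidirect z = x at h₀' h₁'
  have e₀ : finTwoEquivShiftSemidirect (of 0 ^ m) = inr (Multiplicative.ofAdd m) :=
    toShiftSemidirect_of_zero_zpow m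
  have e₁ : finTwoEquivShiftSemidirect (of 1) = inl (of 0) := toShiftSemidirect_of_one
  simp only [e₀, _root_.map_zpow, e₁] at h₀' h₁'
  simp [← _root_.map_zpow] at h₀' h₁'
  have hleft : x.left = 1 := eq_one_of_map_add_right_eq_self hm h₀'
  have hright : x.right = 1 := by
    have := congrArg (lift Multiplicative.ofAdd) h₁'
    simp only [hleft, one_mul, mul_one, _root_.map_zpow, map.of, lift_apply_of, zero_add,
      ofAdd_zero, one_zpow, ofAdd_toAdd] at this
    exact (IsMulTorsionFree.zpow_eq_one_iff_left hm).mp this.symm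
  ext
  · simp [hleft]
  · simp [hright]

end FreeGroup

theorem Subgroup.Normal.commute_sq_of_zpowers {G : Type*} [Group G] [IsMulTorsionFree G] {z : G}
    (hz : (Subgroup.zpowers z).Normal) (t : G) : Commute (t ^ 2) z := by
  rcases eq_or_ne z 1 with rfl | hz1
  · exact Commute.one_right _
  obtain ⟨p, hp⟩ := Subgroup.mem_zpowers_iff.mp (hz.conj_mem z (Subgroup.mem_zpowers z) t)
  obtain ⟨q, hq⟩ := Subgroup.mem_zpowers_iff.mp (hz.conj_mem z (Subgroup.mem_zpowers z) t⁻¹)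
  set c := MulAut.conj t
  have hc : c z = z ^ p := hp.symm
  have hc' : c⁻¹ z = z ^ q := by rw [hq, ← map_inv]; rfl
  have hqp : z ^ (q * p - 1) = 1 := by
    have : z ^ (q * p) = z := by
      calc z ^ (q * p) = c⁻¹ (c z) := by rw [hc, map_zpow, hc', zpow_mul]
        _ = z := by simp
    rw [zpow_sub_one, this, mul_inv_cancel]
  -- conjugation by `t` is an automorphism of `⟨z⟩ ≅ ℤ`, so `p = ±1`
  have hpp : p * p = 1 := by
    have := (IsMulTorsionFree.zpow_eq_one_iff_right hz1).mp hqp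
    rcases Int.eq_one_or_neg_one_of_mul_eq_one' (u := q) (v := p) (by omega) with h | h <;>
      simp [h.2]
  have : MulAut.conj (t ^ 2) z = z := by
    rw [map_pow, pow_two, MulAut.mul_apply, hc, map_zpow, hc, ← zpow_mul, hpp, zpow_one]
  exact mul_inv_eq_iff_eq_mul.mp this

theorem FreeGroup.eq_bot_of_normal_of_isCyclic (M : Subgroup (FreeGroup (Fin 2))) [M.Normal]
    [IsCyclic M] : M = ⊥ := by
  obtain ⟨z, rfl⟩ := (Subgroup.isCyclic_iff_exists_zpowers_eq_top M).mp ‹_›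
  have hz : (Subgroup.zpowers z).Normal := ‹_›
  rw [eq_one_of_commute_zpow two_ne_zero (hz.commute_sq_of_zpowers _)
    (hz.commute_sq_of_zpowers _), Subgroup.zpowers_one_eq_bot]

theorem IsFreeGroup.isCyclic_or_exists_injective_lift (H : Type*) [Group H] [IsFreeGroup H] :
    IsCyclic H ∨ ∃ u v : H, Function.Injective (FreeGroup.lift ![u, v]) := by
  set e := IsFreeGroup.mulEquiv H
  rcases subsingleton_or_nontrivial (IsFreeGroup.Generators H) with _ | ⟨x, y, hxy⟩
  · refine .inl (e.isCyclic.mp ?_)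
    rcases isEmpty_or_nonempty (IsFreeGroup.Generators H) with _ | ⟨⟨x⟩⟩
    · infer_instance
    · have := uniqueOfSubsingleton x
      infer_instance
  · refine .inr ⟨e (.of x), e (.of y), ?_⟩
    have : FreeGroup.lift ![e (.of x), e (.of y)] = e.toMonoidHom.comp (FreeGroup.map ![x, y]) := by
      ext i; fin_cases i <;> simp
    rw [this]
    exact e.injective.comp (FreeGroup.map_injective (injective_pair_iff_ne.mpr hxy))

def SatisfiesLaw (G : Type*) [Group G] {α : Type*} (w : FreeGroup α) : Prop :=
  ∀ f : α → G, FreeGroup.lift f w = 1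

section SatisfiesLaw

variable {G K : Type*} [Group G] [Group K] {α : Type*} {w : FreeGroup α}

theorem satisfiesLaw_subgroup_iff {H : Subgroup G} :
    SatisfiesLaw H w ↔ ∀ f : α → G, (∀ i, f i ∈ H) → FreeGroup.lift f w = 1 := by
  constructor
  · intro h f hf
    simpa [← FreeGroup.lift_comp_apply, Function.comp_def] using
      congrArg H.subtype (h fun i => ⟨f i, hf i⟩)
  · intro h f
    apply H.subtype_injective
    simpa [← FreeGroup.lift_comp_apply] using h (H.subtype ∘ f) fun i => (f i).2

theorem SatisfiesLaw.of_injective {φ : G →* K} (hφ : Function.Injective φ)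
    (h : SatisfiesLaw K w) : SatisfiesLaw G w := fun f =>
  hφ (by rw [← FreeGroup.lift_comp_apply, h, map_one])

theorem SatisfiesLaw.compWord {N H : Subgroup G} [N.Normal] {β : Type*} {v : FreeGroup β}
    (hN : SatisfiesLaw N v) (hH : SatisfiesLaw (H.map (QuotientGroup.mk' N)) w) :
    SatisfiesLaw H (v.compWord w) := by
  rw [satisfiesLaw_subgroup_iff] at hN hH ⊢
  intro f hf
  rw [FreeGroup.lift_compWord]
  refine hN _ fun i => ?_
  rw [← QuotientGroup.eq_one_iff, ← QuotientGroup.mk'_apply, ← FreeGroup.lift_comp_apply]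
  exact hH _ fun j => H.mem_map_of_mem _ (hf (i, j))

theorem FreeGroup.eq_one_of_satisfiesLaw_finTwo [Countable α]
    (h : SatisfiesLaw (FreeGroup (Fin 2)) w) : w = 1 := by
  obtain ⟨e, he⟩ := Countable.exists_injective_nat α
  have hinj := lift_conj_zpow_injective.comp
    (map_injective (Nat.cast_injective.comp he : Function.Injective ((↑) ∘ e : α → ℤ)))
  apply hinj
  simp only [Function.comp_apply, _root_.map_one]
  rw [map_eq_lift, ← lift_comp_apply]
  exact h _

theorem FreeGroup.eq_bot_of_normal_of_satisfiesLaw [Countable α] (hw : w ≠ 1)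
    (M : Subgroup (FreeGroup (Fin 2))) [M.Normal] (hM : SatisfiesLaw M w) : M = ⊥ := by
  rcases IsFreeGroup.isCyclic_or_exists_injective_lift M with _ | ⟨u, v, huv⟩
  · exact eq_bot_of_normal_of_isCyclic M
  · exact absurd (eq_one_of_satisfiesLaw_finTwo (hM.of_injective huv)) hw

theorem Subgroup.comap_lift_eq_bot_of_satisfiesLaw (N : Subgroup G) [N.Normal] [Countable α]
    (hw : w ≠ 1) (hN : SatisfiesLaw N w) {a b : G}
    (hab : Function.Injective (FreeGroup.lift ![a, b])) :
    N.comap (FreeGroup.lift ![a, b]) = ⊥ :=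
  FreeGroup.eq_bot_of_normal_of_satisfiesLaw hw _ <|
    hN.of_injective (φ := (FreeGroup.lift ![a, b]).subgroupComap N) fun _ _ hxy =>
      Subtype.ext (hab (congrArg Subtype.val hxy))

end SatisfiesLaw

theorem ShortWord.exists_preimage {G Q : Type*} [Group G] [Group Q] (π : G →* Q) {S : Set G}
    {n : ℕ} {q : Q} (h : ShortWord (π '' S) n q) : ∃ g, ShortWord S n g ∧ π g = q := by
  obtain ⟨l, hl, hlen, rfl⟩ := h
  have : ∀ x ∈ l, ∃ y, (y ∈ S ∨ y⁻¹ ∈ S) ∧ π y = x := by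
    intro x hx
    rcases hl x hx with ⟨s, hs, rfl⟩ | ⟨s, hs, hsx⟩
    · exact ⟨s, .inl hs, rfl⟩
    · exact ⟨s⁻¹, .inr (by simpa), by rw [map_inv, hsx, inv_inv]⟩
  choose y hyS hy using this
  refine ⟨(l.attach.map fun x => y x.1 x.2).prod, ⟨_, ?_, by simpa using hlen, rfl⟩, ?_⟩
  · simp only [List.mem_map, List.mem_attach, true_and, Subtype.exists]
    rintro _ ⟨x, hx, rfl⟩
    exact hyS x hx
  · rw [map_list_prod, List.map_map]
    conv_rhs => rw [← List.attach_map_subtype_val l]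
    congr 1
    exact List.map_congr_left fun x _ => hy x.1 x.2

/-- Let N ⊴ G satisfy a (nontrivial) law w_N.  If every subgroup of
G/N satisfies the law w' or contains an N'-short free subgroup with respect to
each finite generating set, then every subgroup of G satisfies the composite law
w_N ∘ w' or contains an N'-short free subgroup; moreover a rank-2 free subgroup
of G meets N trivially and injects into G/N. -/
theorem law_alternative_law_kernel {G : Type*} [Group G] (N : Subgroup G) [N.Normal]
    {r₁ r₂ : ℕ} (wN : FreeGroup (Fin r₁)) (w' : FreeGroup (Fin r₂)) (N' : ℕ)
    (hwN : wN ≠ 1)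
    (hN : ∀ f : Fin r₁ → G, (∀ i, f i ∈ N) → FreeGroup.lift f wN = 1)
    (hQ : ∀ S : Finset (G ⧸ N),
      (∀ f : Fin r₂ → G ⧸ N, (∀ i, f i ∈ Subgroup.closure (S : Set (G ⧸ N))) →
        FreeGroup.lift f w' = 1) ∨
      (∃ a b : G ⧸ N, ShortWord (S : Set (G ⧸ N)) N' a ∧
        ShortWord (S : Set (G ⧸ N)) N' b ∧
        Function.Injective ⇑(FreeGroup.lift ![a, b] : FreeGroup (Fin 2) →* G ⧸ N))) :
    (∀ S : Finset G,
      (∀ f : Fin r₁ × Fin r₂ → G, (∀ i, f i ∈ Subgroup.closure (S : Set G)) →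
        FreeGroup.lift f
          (FreeGroup.lift (fun i => FreeGroup.map (fun j => (i, j)) w') wN) = 1) ∨
      (∃ a b : G, ShortWord (S : Set G) N' a ∧ ShortWord (S : Set G) N' b ∧
        Function.Injective ⇑(FreeGroup.lift ![a, b] : FreeGroup (Fin 2) →* G))) ∧
    (∀ a b : G,
      Function.Injective ⇑(FreeGroup.lift ![a, b] : FreeGroup (Fin 2) →* G) →
      (∀ x ∈ Subgroup.closure {a, b} ⊓ N, x = (1 : G)) ∧
      Function.Injective
        ⇑((QuotientGroup.mk' N).comp (FreeGroup.lift ![a, b])))   := by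
  classical
  refine ⟨fun S => ?_, fun a b hab => ?_⟩
  · rcases hQ (S.image (QuotientGroup.mk' N)) with hlaw | ⟨a, b, ha, hb, hab⟩
    · have hH : SatisfiesLaw ((Subgroup.closure (S : Set G)).map (QuotientGroup.mk' N)) w' := by
        rwa [MonoidHom.map_closure, ← Finset.coe_image, satisfiesLaw_subgroup_iff]
      exact .inl (satisfiesLaw_subgroup_iff.mp ((satisfiesLaw_subgroup_iff.mpr hN).compWord hH))
    · rw [Finset.coe_image] at ha hb
      obtain ⟨a', ha', rfl⟩ := ha.exists_preimage
      obtain ⟨b', hb', rfl⟩ := hb.exists_preimage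
      exact .inr ⟨a', b', ha', hb', FreeGroup.injective_lift_of_map_pair _ hab⟩
  · have hM := N.comap_lift_eq_bot_of_satisfiesLaw hwN (satisfiesLaw_subgroup_iff.mpr hN) hab
    refine ⟨fun x ⟨hx, hxN⟩ => ?_, ?_⟩
    · rw [← Matrix.range_cons_cons_empty a b ![], ← FreeGroup.range_lift_eq_closure] at hx
      obtain ⟨g, rfl⟩ := hx
      rw [show g = 1 from Subgroup.mem_bot.mp (hM ▸ hxN), map_one]
    · rw [← MonoidHom.ker_eq_bot_iff, ← MonoidHom.comap_ker, QuotientGroup.ker_mk', hM]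
end
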